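/- arXiv:1205.1882 — 2 statements merged into one kernel-verified Lean document; each statement's English description precedes it below -/
import Mathlib

section
/- Let h be a freeway segment of speed v > 1 with slope angle α ∈ [0, π/4] passing through the facility f, and let p be a point strictly above the line of h with x(p) between the x-coordinates of f and the upper endpoint of h. If α > φ_v = π/4 − arcsin(√2/(2v)), then entering the freeway at the vertical projection p′ of p is at least as fast as entering at any other point q of h: ‖p − p′‖₁ + ‖p′ − f‖₂/v ≤ ‖p − q‖₁ + ‖q − f‖₂/v for all q ∈ h between f and the endpoint above p. -/
/-!
Write `d = (cos α, sin α)`, so that `p' = f + u • d` with `u ≥ 0` and `q = f + s • d`.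
Going from `p` to `q` walks `|s - u| cos α` horizontally and at least `(p - p').2 - (s - u) sin α`
vertically, while the freeway part changes by `(|s| - u) / v ≥ (s - u) / v`. So entering at `q`
costs at least `|s - u| cos α + (s - u) (1/v - sin α)` more than entering at `p'`, which is
nonnegative because `|1/v - sin α| ≤ cos α` for `v > 1` and `α ∈ [0, π/4]`.
-/

noncomputable def n1 (p : ℝ × ℝ) : ℝ := |p.1| + |p.2|
noncomputable def n2 (p : ℝ × ℝ) : ℝ := Real.sqrt (p.1 ^ 2 + p.2 ^ 2)

open Real

lemma n2_smul (s : ℝ) (x : ℝ × ℝ) : n2 (s • x) = |s| * n2 x := by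
  rw [n2, n2, ← Real.sqrt_sq_eq_abs, ← Real.sqrt_mul (sq_nonneg s)]
  congr 1
  simp only [Prod.smul_fst, Prod.smul_snd, smul_eq_mul]
  ring

lemma n2_cos_sin (α : ℝ) : n2 (cos α, sin α) = 1 := by
  simp [n2, add_comm (cos α ^ 2), sin_sq_add_cos_sq]

lemma abs_inv_sub_sin_le_cos {v α : ℝ} (hv : 1 ≤ v) (hα0 : 0 ≤ α) (hα1 : α ≤ π / 4) :
    |v⁻¹ - sin α| ≤ cos α := by
  have hcos : 0 < cos α := cos_pos_of_mem_Ioo ⟨by linarith [pi_pos], by linarith [pi_pos]⟩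
  have hsin : 0 ≤ sin α := sin_nonneg_of_nonneg_of_le_pi hα0 (by linarith [pi_pos])
  have hsin_le_cos : sin α ≤ cos α := by
    rw [← cos_pi_div_two_sub]
    exact cos_le_cos_of_nonneg_of_le_pi hα0 (by linarith [pi_pos]) (by linarith)
  have hone_le : 1 ≤ sin α + cos α := by nlinarith [sin_sq_add_cos_sq α]
  have hinv : 0 < v⁻¹ ∧ v⁻¹ ≤ 1 := ⟨by positivity, inv_le_one_of_one_le₀ hv⟩
  rw [abs_le]
  constructor <;> linarith

theorem cost_le_of_vertical_entry {v : ℝ} (hv : 0 ≤ v) {d : ℝ × ℝ} (hd : n2 d = 1)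
    (hslope : |v⁻¹ - d.2| ≤ d.1) {f p p' q : ℝ × ℝ} {u s : ℝ} (hu : 0 ≤ u)
    (hp' : p' = f + u • d) (hp1 : p.1 = p'.1) (hp2 : p'.2 ≤ p.2) (hq : q = f + s • d) :
    n1 (p - p') + n2 (p' - f) / v ≤ n1 (p - q) + n2 (q - f) / v := by
  have hwalk_vertical : n1 (p - p') = p.2 - p'.2 := by
    simp [n1, hp1, abs_of_nonneg (sub_nonneg.mpr hp2)]
  have hwalk : |s - u| * d.1 + (p.2 - p'.2) - (s - u) * d.2 ≤ n1 (p - q) := by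
    have hpq : p - q = (-((s - u) * d.1), p.2 - p'.2 - (s - u) * d.2) := by
      ext
      · simp only [Prod.fst_sub, Prod.fst_add, Prod.smul_fst, smul_eq_mul, hp1, hq, hp']; ring
      · simp only [Prod.snd_sub, Prod.snd_add, Prod.smul_snd, smul_eq_mul, hq, hp']; ring
    rw [hpq, n1, abs_neg, abs_mul, abs_of_nonneg ((abs_nonneg _).trans hslope)]
    linarith [le_abs_self (p.2 - p'.2 - (s - u) * d.2)]
  have hride' : n2 (p' - f) = u := by
    rw [hp', add_sub_cancel_left, n2_smul, hd, abs_of_nonneg hu, mul_one]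
  have hride : n2 (q - f) = |s| := by rw [hq, add_sub_cancel_left, n2_smul, hd, mul_one]
  have hgain : -((s - u) * (v⁻¹ - d.2)) ≤ |s - u| * d.1 :=
    calc -((s - u) * (v⁻¹ - d.2)) ≤ |(s - u) * (v⁻¹ - d.2)| := neg_le_abs _
      _ = |s - u| * |v⁻¹ - d.2| := abs_mul _ _
      _ ≤ |s - u| * d.1 := mul_le_mul_of_nonneg_left hslope (abs_nonneg _)
  have hfreeway : (s - u) * v⁻¹ ≤ (|s| - u) * v⁻¹ :=
    mul_le_mul_of_nonneg_right (by linarith [le_abs_self s]) (inv_nonneg.mpr hv)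
  rw [hwalk_vertical, hride', hride, div_eq_mul_inv, div_eq_mul_inv]
  linarith

theorem stmt15_general (v α L : ℝ) (hv : 1 < v) (hα0 : 0 ≤ α) (hα1 : α ≤ Real.pi / 4)
    (f p : ℝ × ℝ)
    (e' : ℝ × ℝ) (he' : e' = f + L • (Real.cos α, Real.sin α))
    (habove : f.2 + (p.1 - f.1) * Real.tan α < p.2)
    (hx1 : f.1 ≤ p.1)
    (p' : ℝ × ℝ) (hp' : p' = (p.1, f.2 + (p.1 - f.1) * Real.tan α)) :
    ∀ q ∈ segment ℝ f e',
      n1 (p - p') + n2 (p' - f) / v ≤ n1 (p - q) + n2 (q - f) / v := by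
  intro q hq
  rw [segment_eq_image'] at hq
  obtain ⟨t, -, rfl⟩ := hq
  have hcos : 0 < cos α := cos_pos_of_mem_Ioo ⟨by linarith [pi_pos], by linarith [pi_pos]⟩
  refine cost_le_of_vertical_entry (by linarith) (n2_cos_sin α)
    (abs_inv_sub_sin_le_cos hv.le hα0 hα1) (u := (p.1 - f.1) / cos α) (s := t * L)
    (div_nonneg (sub_nonneg.mpr hx1) hcos.le) ?_ (by rw [hp']) (by rw [hp']; exact habove.le) ?_
  · rw [hp', tan_eq_sin_div_cos]
    ext
    · simp [div_mul_cancel₀ _ hcos.ne']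
    · simp only [Prod.smul_mk, smul_eq_mul, Prod.snd_add, add_right_inj]
      field_simp
  · rw [he', add_sub_cancel_left, ← smul_smul]

theorem stmt15 (v α L : ℝ) (hv : 1 < v) (hα0 : 0 ≤ α) (hα1 : α ≤ Real.pi / 4)
    (hφ : Real.pi / 4 - Real.arcsin (Real.sqrt 2 / (2 * v)) < α)
    (hL : 0 < L) (f p : ℝ × ℝ)
    (e' : ℝ × ℝ) (he' : e' = f + L • (Real.cos α, Real.sin α))
    (habove : f.2 + (p.1 - f.1) * Real.tan α < p.2)
    (hx1 : f.1 ≤ p.1) (hx2 : p.1 ≤ e'.1)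
    (p' : ℝ × ℝ) (hp' : p' = (p.1, f.2 + (p.1 - f.1) * Real.tan α)) :
    ∀ q ∈ segment ℝ f e',
      n1 (p - p') + n2 (p' - f) / v ≤ n1 (p - q) + n2 (q - f) / v :=
  stmt15_general v α L hv hα0 hα1 f p e' he' habove hx1 p' hp'
end

section
/- Let f lie on a freeway h with speed v > 1. For every R > 0, the ball B_h(f,R) = {p ∈ ℝ² : d_h(p,f) ≤ R} is a convex set. -/
noncomputable def dfree (a b : ℝ × ℝ) (v : ℝ) (p f : ℝ × ℝ) : ℝ :=
  min (n1 (p - f))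
    (sInf {c : ℝ | ∃ q₁ ∈ segment ℝ a b, ∃ q₂ ∈ segment ℝ a b,
      c = n1 (p - q₁) + n2 (q₁ - q₂) / v + n1 (q₂ - f)})

open Set

theorem convexOn_csInf_image_of_convexOn_prod {E F : Type*} [AddCommMonoid E] [Module ℝ E]
    [AddCommMonoid F] [Module ℝ F] {s : Set F} {g : E × F → ℝ}
    (hg : ConvexOn ℝ (univ ×ˢ s) g) (hne : s.Nonempty)
    (hbdd : ∀ x, BddBelow ((fun y ↦ g (x, y)) '' s)) :
    ConvexOn ℝ univ fun x ↦ sInf ((fun y ↦ g (x, y)) '' s) := by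
  set m : E → ℝ := fun x ↦ sInf ((fun y ↦ g (x, y)) '' s)
  refine ⟨convex_univ, fun x _ x' _ t t' ht ht' htt' ↦ le_of_forall_pos_le_add fun ε hε ↦ ?_⟩
  obtain ⟨_, ⟨y, hy, rfl⟩, hxy⟩ :=
    exists_lt_of_csInf_lt (hne.image _) (lt_add_of_pos_right (m x) hε)
  obtain ⟨_, ⟨y', hy', rfl⟩, hxy'⟩ :=
    exists_lt_of_csInf_lt (hne.image _) (lt_add_of_pos_right (m x') hε)
  have hmem : (x, y) ∈ univ ×ˢ s := mk_mem_prod (mem_univ x) hy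
  have hmem' : (x', y') ∈ univ ×ˢ s := mk_mem_prod (mem_univ x') hy'
  calc m (t • x + t' • x')
      ≤ g (t • x + t' • x', t • y + t' • y') :=
        csInf_le (hbdd _) ⟨_, (hg.1 hmem hmem' ht ht' htt').2, rfl⟩
    _ ≤ t * g (x, y) + t' * g (x', y') := hg.2 hmem hmem' ht ht' htt'
    _ ≤ t * (m x + ε) + t' * (m x' + ε) := by gcongr
    _ = t • m x + t' • m x' + ε := by rw [smul_eq_mul, smul_eq_mul]; linear_combination ε * htt'

theorem convexOn_n1 : ConvexOn ℝ univ n1 := by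
  have h : n1 = norm ∘ LinearMap.fst ℝ ℝ ℝ + norm ∘ LinearMap.snd ℝ ℝ ℝ := by
    ext p; simp [n1]
  have hfst := (convexOn_norm (E := ℝ) convex_univ).comp_linearMap (LinearMap.fst ℝ ℝ ℝ)
  have hsnd := (convexOn_norm (E := ℝ) convex_univ).comp_linearMap (LinearMap.snd ℝ ℝ ℝ)
  rw [preimage_univ] at hfst hsnd
  rw [h]
  exact hfst.add hsnd

-- `ℝ × ℝ` carries the sup norm; the Euclidean norm lives on `WithLp 2 (ℝ × ℝ)`.
theorem convexOn_n2 : ConvexOn ℝ univ n2 := by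
  have h : n2 = norm ∘ (WithLp.linearEquiv 2 ℝ (ℝ × ℝ)).symm := by
    ext p; simp [n2, WithLp.prod_norm_eq_of_L2]
  rw [h]
  exact (convexOn_norm convex_univ).comp_linearMap (WithLp.linearEquiv 2 ℝ (ℝ × ℝ)).symm.toLinearMap

noncomputable def routeLength (v : ℝ) (f p : ℝ × ℝ) (q : (ℝ × ℝ) × (ℝ × ℝ)) : ℝ :=
  n1 (p - q.1) + n2 (q.1 - q.2) / v + n1 (q.2 - f)

theorem convexOn_routeLength {v : ℝ} (hv : 0 ≤ v) (f : ℝ × ℝ) :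
    ConvexOn ℝ univ fun z : (ℝ × ℝ) × (ℝ × ℝ) × (ℝ × ℝ) ↦ routeLength v f z.1 z.2 := by
  let P := ℝ × ℝ
  have h1 := convexOn_n1.comp_linearMap
    (LinearMap.fst ℝ P (P × P) - LinearMap.fst ℝ P P ∘ₗ LinearMap.snd ℝ P (P × P))
  have h2 := (convexOn_n2.comp_linearMap
    ((LinearMap.fst ℝ P P - LinearMap.snd ℝ P P) ∘ₗ LinearMap.snd ℝ P (P × P))).smul
      (inv_nonneg.2 hv)
  have h3 := (convexOn_n1.translate_right (-f)).comp_linearMap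
    (LinearMap.snd ℝ P P ∘ₗ LinearMap.snd ℝ P (P × P))
  simp only [preimage_univ] at h1 h2 h3
  refine ((h1.add h2).add h3).congr fun z _ ↦ ?_
  simp [routeLength, div_eq_inv_mul, sub_eq_neg_add]

theorem routeLength_nonneg {v : ℝ} (hv : 0 ≤ v) (f p : ℝ × ℝ) (q : (ℝ × ℝ) × (ℝ × ℝ)) :
    0 ≤ routeLength v f p q := by
  unfold routeLength n1 n2
  positivity

theorem dfree_eq_csInf {a b f : ℝ × ℝ} {v : ℝ} (hv : 0 ≤ v) (hf : f ∈ segment ℝ a b)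
    (p : ℝ × ℝ) :
    dfree a b v p f = sInf ((routeLength v f p) '' (segment ℝ a b ×ˢ segment ℝ a b)) := by
  have hset : {c : ℝ | ∃ q₁ ∈ segment ℝ a b, ∃ q₂ ∈ segment ℝ a b,
      c = n1 (p - q₁) + n2 (q₁ - q₂) / v + n1 (q₂ - f)} =
      (routeLength v f p) '' (segment ℝ a b ×ˢ segment ℝ a b) := by
    ext c
    constructor
    · rintro ⟨q₁, h₁, q₂, h₂, rfl⟩
      exact ⟨(q₁, q₂), ⟨h₁, h₂⟩, rfl⟩
    · rintro ⟨⟨q₁, q₂⟩, ⟨h₁, h₂⟩, rfl⟩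
      exact ⟨q₁, h₁, q₂, h₂, rfl⟩
  rw [dfree, hset, min_eq_right]
  calc sInf ((routeLength v f p) '' (segment ℝ a b ×ˢ segment ℝ a b))
      ≤ routeLength v f p (f, f) :=
        csInf_le ⟨0, forall_mem_image.2 fun q _ ↦ routeLength_nonneg hv f p q⟩
          (mem_image_of_mem _ (mk_mem_prod hf hf))
    _ = n1 (p - f) := by simp [routeLength, n1, n2]

theorem convexOn_dfree {a b f : ℝ × ℝ} {v : ℝ} (hv : 0 ≤ v) (hf : f ∈ segment ℝ a b) :
    ConvexOn ℝ univ fun p ↦ dfree a b v p f := by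
  simp_rw [dfree_eq_csInf hv hf]
  have hne : (segment ℝ a b ×ˢ segment ℝ a b).Nonempty := ⟨(f, f), hf, hf⟩
  have hconv : ConvexOn ℝ (univ ×ˢ (segment ℝ a b ×ˢ segment ℝ a b))
      fun z ↦ routeLength v f z.1 z.2 :=
    (convexOn_routeLength hv f).subset (subset_univ _)
      (convex_univ.prod ((convex_segment a b).prod (convex_segment a b)))
  exact convexOn_csInf_image_of_convexOn_prod hconv hne
    fun p ↦ ⟨0, forall_mem_image.2 fun q _ ↦ routeLength_nonneg hv f p q⟩

theorem stmt16_general (a b f : ℝ × ℝ) (v : ℝ) (hv : 1 < v) (hf : f ∈ segment ℝ a b)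
    (R : ℝ) :
    Convex ℝ {p : ℝ × ℝ | dfree a b v p f ≤ R} := by
  simpa using (convexOn_dfree (zero_le_one.trans hv.le) hf).convex_le R

theorem stmt16 (a b f : ℝ × ℝ) (v : ℝ) (hv : 1 < v) (hf : f ∈ segment ℝ a b)
    (R : ℝ) (hR : 0 < R) :
    Convex ℝ {p : ℝ × ℝ | dfree a b v p f ≤ R} :=
  stmt16_general a b f v hv hf R
end
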